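/- arXiv:2006.15780 — 4 statements merged into one kernel-verified Lean document; each statement's English description precedes it below -/
import Mathlib

section
/- Theorem 1 (identification of the ATT). Suppose that, pointwise on the sample space, Y_t(0) = ξ + λ·F_t + X'β_t + W'α + U_t for every t = 1,…,T, with the normalizations F_1 = 0, F_2 = 1, β_1 = β_2 = 0, where the coefficient vector α on W is the same in every period. Suppose Y_1 = Y_1(0) and Y_2 = Y_2(0) pointwise; that on the event {D=1} the observed outcome satisfies Y_t = Y_t(1) for the post-treatment period t ≥ t*; P(D=1) > 0; and E[U_1 | D=1] = E[U_2 | D=1] = E[U_t | D=1] = 0. Then ATT_t = E[Y_t | D=1] − ( E[Y_1 | D=1] + E[X | D=1]·β_t + F_t·E[Y_2 − Y_1 | D=1] ). -/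
open MeasureTheory ProbabilityTheory

open scoped ENNReal

lemma ae_eq_cond_of_eqOn {Ω : Type*} [MeasurableSpace Ω] (μ : Measure Ω) [IsFiniteMeasure μ]
    (s : Set Ω) {f g : Ω → ℝ}
    (hf : AEStronglyMeasurable f (μ[|s])) (hg : AEStronglyMeasurable g (μ[|s]))
    (heq : ∀ ω ∈ s, f ω = g ω) : f =ᵐ[μ[|s]] g := by
  set ν := μ[|s] with hν
  have hνdef : ν = ((μ s)⁻¹ : ℝ≥0∞) • μ.restrict s := rfl
  obtain ⟨f', hf'm, hff'⟩ := hf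
  obtain ⟨g', hg'm, hgg'⟩ := hg
  set N1 := {ω | f ω ≠ f' ω}
  set N2 := {ω | g ω ≠ g' ω}
  have hN1 : ν N1 = 0 := hff'
  have hN2 : ν N2 = 0 := hgg'
  have hrnull : ∀ N : Set Ω, ν N = 0 → μ ((toMeasurable (μ.restrict s) N) ∩ s) = 0 := by
    intro N hN
    have h1 : μ.restrict s N = 0 := by
      have := hN
      rw [hνdef, Measure.smul_apply, smul_eq_mul] at this
      have hne : ((μ s)⁻¹ : ℝ≥0∞) ≠ 0 := ENNReal.inv_ne_zero.mpr (measure_ne_top μ s)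
      exact ((mul_eq_zero.mp this)).resolve_left hne
    have h2 : μ.restrict s (toMeasurable (μ.restrict s) N) = 0 := by
      rw [measure_toMeasurable]; exact h1
    rwa [Measure.restrict_apply (measurableSet_toMeasurable _ _)] at h2
  set M1 := toMeasurable (μ.restrict s) N1
  set M2 := toMeasurable (μ.restrict s) N2
  have hM1 : μ (M1 ∩ s) = 0 := hrnull _ hN1
  have hM2 : μ (M2 ∩ s) = 0 := hrnull _ hN2
  set C := {ω | f' ω ≠ g' ω}
  have hCm : MeasurableSet C := by
    have : MeasurableSet {ω | f' ω = g' ω} := measurableSet_eq_fun hf'm.measurable hg'm.measurable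
    exact this.compl
  have hCs : μ (C ∩ s) = 0 := by
    have hsub : C ∩ s ⊆ (M1 ∩ s) ∪ (M2 ∩ s) := by
      rintro ω ⟨hC, hs⟩
      have hfg : f ω = g ω := heq ω hs
      by_cases h1 : f ω = f' ω
      · right
        refine ⟨subset_toMeasurable _ _ ?_, hs⟩
        intro hgeq
        exact hC (by rw [← h1, ← hgeq] at *; rw [← h1, hfg, hgeq] )
      · left; exact ⟨subset_toMeasurable _ _ h1, hs⟩
    exact measure_mono_null hsub (by
      exact measure_union_null hM1 hM2)
  have hCν : ν C = 0 := by
    rw [hνdef, Measure.smul_apply, smul_eq_mul, Measure.restrict_apply hCm, hCs, mul_zero]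
  have : {ω | f ω ≠ g ω} ⊆ N1 ∪ C ∪ N2 := by
    intro ω hω
    by_cases h1 : f ω = f' ω
    · by_cases h2 : g ω = g' ω
      · left; right; simp only [C, Set.mem_setOf_eq]; rw [← h1, ← h2]; exact hω
      · right; exact h2
    · left; left; exact h1
  exact measure_mono_null this (measure_union_null (measure_union_null hN1 hCν) hN2)

/-- Theorem 1, identification of the ATT.
Under the IFE model `Y_t(0) = ξ + λ·F_t + X'β_t + W'α + U_t` with the
normalizations `F_1 = 0`, `F_2 = 1`, `β_1 = β_2 = 0` (and the coefficient `α`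
on `W` constant over time), with `Y_1 = Y_1(0)`, `Y_2 = Y_2(0)` pointwise,
`Y_t = Y_t(1)` on `{D=1}` for the post-treatment period `t ≥ t*`,
`P(D=1) > 0`, and `E[U_1|D=1] = E[U_2|D=1] = E[U_t|D=1] = 0`, we have
`ATT_t = E[Y_t|D=1] − (E[Y_1|D=1] + E[X|D=1]·β_t + F_t·E[Y_2 − Y_1|D=1])`. -/
theorem statement4
    {Ω : Type*} [MeasurableSpace Ω] (μ : Measure Ω) [IsProbabilityMeasure μ]
    (T KX KW tstar t : ℕ) (hT : 3 ≤ T) (htstar : 3 ≤ tstar) (ht : tstar ≤ t)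
    (htT : t ≤ T)
    (Y0 Y1p Y U : ℕ → Ω → ℝ) (ξ lam : Ω → ℝ)
    (X : Ω → Fin KX → ℝ) (W : Ω → Fin KW → ℝ) (D : Ω → ℝ)
    (F : ℕ → ℝ) (β : ℕ → Fin KX → ℝ) (α : Fin KW → ℝ)
    (hD : ∀ ω, D ω = 0 ∨ D ω = 1)
    (hmodel : ∀ s, 1 ≤ s → s ≤ T → ∀ ω,
      Y0 s ω = ξ ω + lam ω * F s + (∑ i, X ω i * β s i)
        + (∑ j, W ω j * α j) + U s ω)
    (hF1 : F 1 = 0) (hF2 : F 2 = 1) (hβ1 : β 1 = 0) (hβ2 : β 2 = 0)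
    (hY1 : ∀ ω, Y 1 ω = Y0 1 ω) (hY2 : ∀ ω, Y 2 ω = Y0 2 ω)
    (hYt : ∀ ω, D ω = 1 → Y t ω = Y1p t ω)
    (hpos : 0 < μ {ω | D ω = 1})
    (hU : ∀ s, s = 1 ∨ s = 2 ∨ s = t →
      ∫ ω, U s ω ∂μ[|{ω | D ω = 1}] = 0)
    (hintY : ∀ s, s = 1 ∨ s = 2 ∨ s = t →
      Integrable (Y s) (μ[|{ω | D ω = 1}]))
    (hintY0 : Integrable (Y0 t) (μ[|{ω | D ω = 1}]))
    (hintY1p : Integrable (Y1p t) (μ[|{ω | D ω = 1}]))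
    (hintU : ∀ s, s = 1 ∨ s = 2 ∨ s = t →
      Integrable (U s) (μ[|{ω | D ω = 1}]))
    (hintX : ∀ i, Integrable (fun ω => X ω i) (μ[|{ω | D ω = 1}]))
    (hintW : ∀ j, Integrable (fun ω => W ω j) (μ[|{ω | D ω = 1}]))
    (hintξ : Integrable ξ (μ[|{ω | D ω = 1}]))
    (hintlam : Integrable lam (μ[|{ω | D ω = 1}])) :
    ∫ ω, (Y1p t ω - Y0 t ω) ∂μ[|{ω | D ω = 1}]
      = ∫ ω, Y t ω ∂μ[|{ω | D ω = 1}]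
        - (∫ ω, Y 1 ω ∂μ[|{ω | D ω = 1}]
          + (∑ i, (∫ ω, X ω i ∂μ[|{ω | D ω = 1}]) * β t i)
          + F t * ∫ ω, (Y 2 ω - Y 1 ω) ∂μ[|{ω | D ω = 1}]) := by
  set ν := μ[|{ω | D ω = 1}] with hνdef
  -- generic computation of E[Y0 s]
  have key : ∀ s, 1 ≤ s → s ≤ T → Integrable (U s) ν →
      ∫ ω, Y0 s ω ∂ν = (∫ ω, ξ ω ∂ν) + (∫ ω, lam ω ∂ν) * F s
        + (∑ i, (∫ ω, X ω i ∂ν) * β s i) + (∑ j, (∫ ω, W ω j ∂ν) * α j)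
        + ∫ ω, U s ω ∂ν := by
    intro s h1 h2 hUs
    have hilam : Integrable (fun ω => lam ω * F s) ν := hintlam.mul_const _
    have hiX : Integrable (fun ω => ∑ i, X ω i * β s i) ν :=
      integrable_finset_sum _ fun i _ => (hintX i).mul_const _
    have hiW : Integrable (fun ω => ∑ j, W ω j * α j) ν :=
      integrable_finset_sum _ fun j _ => (hintW j).mul_const _
    have hA1 : Integrable (fun ω => ξ ω + lam ω * F s) ν := hintξ.add hilam
    have hA2 : Integrable (fun ω => ξ ω + lam ω * F s + ∑ i, X ω i * β s i) ν := hA1.add hiX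
    have hA3 : Integrable (fun ω => ξ ω + lam ω * F s + ∑ i, X ω i * β s i
        + ∑ j, W ω j * α j) ν := hA2.add hiW
    simp only [hmodel s h1 h2]
    rw [integral_add hA3 hUs,
        integral_add hA2 hiW,
        integral_add hA1 hiX,
        integral_add hintξ hilam,
        integral_mul_const,
        integral_finset_sum _ (fun i _ => (hintX i).mul_const _),
        integral_finset_sum _ (fun j _ => (hintW j).mul_const _)]
    simp only [integral_mul_const]
  have h1T : (1:ℕ) ≤ T := by omega
  have h2T : (2:ℕ) ≤ T := by omega
  have h1t : (1:ℕ) ≤ t := by omega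
  -- E[Y 1]
  have hEY1 : ∫ ω, Y 1 ω ∂ν
      = (∫ ω, ξ ω ∂ν) + (∑ j, (∫ ω, W ω j ∂ν) * α j) := by
    have := key 1 le_rfl h1T (hintU 1 (Or.inl rfl))
    simp only [hY1]
    rw [this, hU 1 (Or.inl rfl), hF1, hβ1]
    simp
  have hEY2 : ∫ ω, Y 2 ω ∂ν
      = (∫ ω, ξ ω ∂ν) + (∫ ω, lam ω ∂ν) + (∑ j, (∫ ω, W ω j ∂ν) * α j) := by
    have := key 2 (by omega) h2T (hintU 2 (Or.inr (Or.inl rfl)))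
    simp only [hY2]
    rw [this, hU 2 (Or.inr (Or.inl rfl)), hF2, hβ2]
    simp
  have hEY0t : ∫ ω, Y0 t ω ∂ν
      = (∫ ω, ξ ω ∂ν) + (∫ ω, lam ω ∂ν) * F t
        + (∑ i, (∫ ω, X ω i ∂ν) * β t i) + (∑ j, (∫ ω, W ω j ∂ν) * α j) := by
    have := key t h1t htT (hintU t (Or.inr (Or.inr rfl)))
    rw [this, hU t (Or.inr (Or.inr rfl)), add_zero]
  -- E[Y t] = E[Y1p t]
  have hEYt : ∫ ω, Y t ω ∂ν = ∫ ω, Y1p t ω ∂ν := by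
    refine integral_congr_ae (ae_eq_cond_of_eqOn μ _ ?_ ?_ ?_)
    · exact (hintY t (Or.inr (Or.inr rfl))).aestronglyMeasurable
    · exact hintY1p.aestronglyMeasurable
    · intro ω hω; exact hYt ω hω
  have hE21 : ∫ ω, (Y 2 ω - Y 1 ω) ∂ν = ∫ ω, lam ω ∂ν := by
    rw [integral_sub (hintY 2 (Or.inr (Or.inl rfl))) (hintY 1 (Or.inl rfl)), hEY2, hEY1]
    ring
  rw [integral_sub hintY1p hintY0, hE21, hEY1, hEY0t, hEYt]
  ring
end

section
/- Conversion of panel moment conditions to repeated cross sections moment conditions. Let (Ω, P) be a probability space carrying (Y_1,…,Y_T, Z, D), where Z = (X', W')' is an ℝ^K-valued random vector and D takes values in {0,1}, and let (Ω_M, P_M) be a probability space carrying (Y, Z_M, D_M, T_idx), where Z_M = (X_M', W_M')' ∈ ℝ^K, D_M ∈ {0,1}, and T_idx takes values in {1,…,T} with π_t := P_M(T_idx = t) > 0 for every t. Assume that for every t the law of (Y, Z_M, D_M) under the conditional measure P_M( · | T_idx = t ) equals the law of (Y_t, Z, D) under P. Write T_t := 1{T_idx = t}. Then for every t ≥ 3,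 every β_t ∈ ℝ^{K_X}, and every F_t ∈ ℝ (all products integrable), E_M[ (1−D_M)·Z_M·( (T_t/π_t)·Y − (T_1/π_1)·Y − X_M'β_t − F_t·( (T_2/π_2)·Y − (T_1/π_1)·Y ) ) ] = E[ (1−D)·Z·( Y_t − Y_1 − X'β_t − F_t·(Y_2 − Y_1) ) ]. In particular, if the panel moment condition on the right-hand side equals 0 ∈ ℝ^K, then so does the repeated cross sections moment condition on the left-hand side. -/
open MeasureTheory ProbabilityTheory

/-!
On the event `{T_idx = s}` the inverse-probability weight `T_r / π_r` is the constant
`1{s = r} / π_r`, so the repeated cross sections moment splits into the sum over `s` of `π_s`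
times a conditional expectation, which by the equality of laws is a panel expectation with
`Y` replaced by `Y_s`. The factor `π_s` cancels the weight `1 / π_s`, so only the periods
`t, 1, 2` survive with the coefficients of the panel contrast, while the covariate term
`X'β` appears in every period and receives total weight `∑ π_s = 1`.
-/

theorem sum_mul_ite_div_mul {ι : Type*} [DecidableEq ι] {S : Finset ι} {π : ι → ℝ} {r : ι}
    (hr : r ∈ S) (hπr : π r ≠ 0) (m : ι → ℝ) :
    ∑ s ∈ S, π s * ((if s = r then 1 else 0) / π r * m s) = m r := by
  rw [Finset.sum_eq_single_of_mem r hr fun s _ hsr => by simp [hsr]]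
  field_simp
  simp

theorem sum_mul_ipw_contrast {ι : Type*} [DecidableEq ι] {S : Finset ι} {π : ι → ℝ}
    (hπS : ∑ s ∈ S, π s = 1) {a b r : ι} (ha : a ∈ S) (hb : b ∈ S) (hr : r ∈ S)
    (hπa : π a ≠ 0) (hπb : π b ≠ 0) (hπr : π r ≠ 0) (m : ι → ℝ) (F c : ℝ) :
    ∑ s ∈ S, π s * (((if s = r then 1 else 0) / π r - (if s = a then 1 else 0) / π a
        - F * ((if s = b then 1 else 0) / π b - (if s = a then 1 else 0) / π a)) * m s - c)
      = m r - m a - F * (m b - m a) - c := by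
  have hterm : ∀ s, π s * (((if s = r then 1 else 0) / π r - (if s = a then 1 else 0) / π a
        - F * ((if s = b then 1 else 0) / π b - (if s = a then 1 else 0) / π a)) * m s - c)
      = π s * ((if s = r then 1 else 0) / π r * m s) - π s * ((if s = a then 1 else 0) / π a * m s)
        - F * (π s * ((if s = b then 1 else 0) / π b * m s)
          - π s * ((if s = a then 1 else 0) / π a * m s)) - π s * c := fun s => by ring
  simp only [hterm, Finset.sum_sub_distrib, ← Finset.mul_sum, ← Finset.sum_mul, hπS, one_mul,
    sum_mul_ite_div_mul ha hπa, sum_mul_ite_div_mul hb hπb, sum_mul_ite_div_mul hr hπr]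

section Mixture

variable {Ω Ω' ι E G : Type*} [MeasurableSpace Ω] [MeasurableSpace Ω'] [MeasurableSpace ι]
  [MeasurableSingletonClass ι] [MeasurableSpace E] [NormedAddCommGroup G] [NormedSpace ℝ G]
  {μ : Measure Ω} {ν : Measure Ω'}

theorem setIntegral_eq_toReal_smul_integral_cond [IsFiniteMeasure ν] (A : Set Ω') (f : Ω' → G) :
    ∫ x in A, f x ∂ν = (ν A).toReal • ∫ x, f x ∂ν[|A] := by
  rcases eq_or_ne (ν A) 0 with hA0 | hA0
  · simp [Measure.restrict_eq_zero.mpr hA0, hA0]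
  · rw [ProbabilityTheory.cond, integral_smul_measure, ENNReal.toReal_inv, smul_smul,
      mul_inv_cancel₀ (ENNReal.toReal_ne_zero.mpr ⟨hA0, measure_ne_top ν A⟩), one_smul]

theorem integral_eq_sum_setIntegral_fiber {τ : Ω' → ι} (hτ : Measurable τ) {S : Finset ι}
    (hS : ∀ x, τ x ∈ S) {f : Ω' → G} (hf : Integrable f ν) :
    ∫ x, f x ∂ν = ∑ s ∈ S, ∫ x in {x | τ x = s}, f x ∂ν := by
  have hcover : (⋃ s ∈ S, {x | τ x = s}) = Set.univ :=
    Set.eq_univ_of_forall fun x => Set.mem_biUnion (hS x) rfl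
  rw [← setIntegral_univ, ← hcover]
  refine integral_biUnion_finset S (fun s _ => hτ (measurableSet_singleton s)) ?_
    fun s _ => hf.integrableOn
  intro s _ r _ hsr
  exact Set.disjoint_left.mpr fun x hs hr => hsr (hs.symm.trans hr)

theorem integral_mixture_eq_sum [IsFiniteMeasure ν] {τ : Ω' → ι} (hτ : Measurable τ)
    {S : Finset ι} (hS : ∀ x, τ x ∈ S) {V : Ω' → E} (hV : Measurable V) {W : ι → Ω → E}
    (hW : ∀ s, Measurable (W s)) (hlaw : ∀ s ∈ S, (ν[|{x | τ x = s}]).map V = μ.map (W s))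
    {φ : ι → E → ℝ} (hφ : ∀ s, Measurable (φ s))
    (hint : Integrable (fun x => φ (τ x) (V x)) ν) :
    ∫ x, φ (τ x) (V x) ∂ν = ∑ s ∈ S, (ν {x | τ x = s}).toReal * ∫ ω, φ s (W s ω) ∂μ := by
  rw [integral_eq_sum_setIntegral_fiber hτ hS hint]
  refine Finset.sum_congr rfl fun s hs => ?_
  have hfiber : MeasurableSet {x | τ x = s} := hτ (measurableSet_singleton s)
  rw [setIntegral_congr_fun hfiber (g := fun x => φ s (V x)) fun x hx => by rw [hx.out],
    setIntegral_eq_toReal_smul_integral_cond, smul_eq_mul,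
    ← integral_map hV.aemeasurable (hφ s).aestronglyMeasurable, hlaw s hs,
    integral_map (hW s).aemeasurable (hφ s).aestronglyMeasurable]

theorem sum_toReal_measure_fiber_eq_one [IsProbabilityMeasure ν] {τ : Ω' → ι}
    (hτ : Measurable τ) {S : Finset ι} (hS : ∀ x, τ x ∈ S) :
    ∑ s ∈ S, (ν {x | τ x = s}).toReal = 1 := by
  simpa [measureReal_def] using
    (integral_eq_sum_setIntegral_fiber hτ hS (integrable_const (1 : ℝ) (μ := ν))).symm

theorem integral_ipw_contrast_eq [IsProbabilityMeasure ν] [DecidableEq ι] {τ : Ω' → ι}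
    (hτ : Measurable τ) {S : Finset ι} (hS : ∀ x, τ x ∈ S) {a b r : ι}
    (ha : a ∈ S) (hb : b ∈ S) (hr : r ∈ S)
    (hνa : ν {x | τ x = a} ≠ 0) (hνb : ν {x | τ x = b} ≠ 0) (hνr : ν {x | τ x = r} ≠ 0)
    {YM : Ω' → ℝ} {UM : Ω' → E} {Y : ι → Ω → ℝ} {U : Ω → E} (hYM : Measurable YM)
    (hUM : Measurable UM) (hY : ∀ s, Measurable (Y s)) (hU : Measurable U)
    (hlaw : ∀ s ∈ S,
      (ν[|{x | τ x = s}]).map (fun x => (YM x, UM x)) = μ.map (fun ω => (Y s ω, U ω)))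
    {g h : E → ℝ} (hg : Measurable g) (hh : Measurable h) (F : ℝ)
    (hint : Integrable (fun x => g (UM x) *
      ((if τ x = r then (1:ℝ) else 0) / (ν {x | τ x = r}).toReal * YM x
        - (if τ x = a then (1:ℝ) else 0) / (ν {x | τ x = a}).toReal * YM x
        - h (UM x)
        - F * ((if τ x = b then (1:ℝ) else 0) / (ν {x | τ x = b}).toReal * YM x
          - (if τ x = a then (1:ℝ) else 0) / (ν {x | τ x = a}).toReal * YM x))) ν)
    (hintY : ∀ s ∈ S, Integrable (fun ω => g (U ω) * Y s ω) μ)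
    (hintH : Integrable (fun ω => g (U ω) * h (U ω)) μ) :
    ∫ x, g (UM x) *
      ((if τ x = r then (1:ℝ) else 0) / (ν {x | τ x = r}).toReal * YM x
        - (if τ x = a then (1:ℝ) else 0) / (ν {x | τ x = a}).toReal * YM x
        - h (UM x)
        - F * ((if τ x = b then (1:ℝ) else 0) / (ν {x | τ x = b}).toReal * YM x
          - (if τ x = a then (1:ℝ) else 0) / (ν {x | τ x = a}).toReal * YM x)) ∂ν
      = ∫ ω, g (U ω) * (Y r ω - Y a ω - h (U ω) - F * (Y b ω - Y a ω)) ∂μ := by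
  set π : ι → ℝ := fun s => (ν {x | τ x = s}).toReal
  set m : ι → ℝ := fun s => ∫ ω, g (U ω) * Y s ω ∂μ
  set c : ℝ := ∫ ω, g (U ω) * h (U ω) ∂μ
  have hπ : ∀ {s}, ν {x | τ x = s} ≠ 0 → π s ≠ 0 := fun hs =>
    ENNReal.toReal_ne_zero.2 ⟨hs, measure_ne_top ν _⟩
  have hpanel : ∀ s ∈ S, ∫ ω, g (U ω) *
      ((if s = r then (1:ℝ) else 0) / π r * Y s ω - (if s = a then (1:ℝ) else 0) / π a * Y s ω
        - h (U ω)
        - F * ((if s = b then (1:ℝ) else 0) / π b * Y s ω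
          - (if s = a then (1:ℝ) else 0) / π a * Y s ω)) ∂μ
      = ((if s = r then 1 else 0) / π r - (if s = a then 1 else 0) / π a
        - F * ((if s = b then 1 else 0) / π b - (if s = a then 1 else 0) / π a)) * m s - c := by
    intro s hs
    rw [← integral_const_mul, ← integral_sub ((hintY s hs).const_mul _) hintH]
    congr 1 with ω
    ring
  have hcontrast : ∫ ω, g (U ω) * (Y r ω - Y a ω - h (U ω) - F * (Y b ω - Y a ω)) ∂μ
      = m r - m a - F * (m b - m a) - c := by
    have hYr := hintY r hr
    have hYa := hintY a ha
    have hYb := hintY b hb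
    calc _ = ∫ ω, (g (U ω) * Y r ω - g (U ω) * Y a ω
            - F * (g (U ω) * Y b ω - g (U ω) * Y a ω)) - g (U ω) * h (U ω) ∂μ := by
          congr 1 with ω; ring
      _ = _ := by
        rw [integral_sub, integral_sub, integral_const_mul, integral_sub hYr hYa,
          integral_sub hYb hYa]
        all_goals fun_prop
  rw [integral_mixture_eq_sum hτ hS (hYM.prodMk hUM) (fun s => (hY s).prodMk hU) hlaw
      (φ := fun s p => g p.2 *
        ((if s = r then (1:ℝ) else 0) / π r * p.1 - (if s = a then (1:ℝ) else 0) / π a * p.1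
          - h p.2
          - F * ((if s = b then (1:ℝ) else 0) / π b * p.1
            - (if s = a then (1:ℝ) else 0) / π a * p.1)))
      (fun s => by fun_prop) hint,
    Finset.sum_congr rfl fun s hs => congrArg (π s * ·) (hpanel s hs), hcontrast]
  exact sum_mul_ipw_contrast (sum_toReal_measure_fiber_eq_one hτ hS) ha hb hr (hπ hνa) (hπ hνb)
    (hπ hνr) m F c

end Mixture

theorem statement14_general
    {Ω Ω' : Type*} [MeasurableSpace Ω] [MeasurableSpace Ω']
    (μ : Measure Ω)
    (ν : Measure Ω') [IsProbabilityMeasure ν]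
    (T KX KW : ℕ)
    (Y : ℕ → Ω → ℝ) (Z : Ω → (Fin KX ⊕ Fin KW) → ℝ) (D : Ω → ℝ)
    (YM : Ω' → ℝ) (ZM : Ω' → (Fin KX ⊕ Fin KW) → ℝ) (DM : Ω' → ℝ)
    (Tidx : Ω' → ℕ)
    (hTrange : ∀ ω', 1 ≤ Tidx ω' ∧ Tidx ω' ≤ T)
    (hmeasY : ∀ s, Measurable (Y s)) (hmeasZ : Measurable Z)
    (hmeasD : Measurable D)
    (hmeasYM : Measurable YM) (hmeasZM : Measurable ZM)
    (hmeasDM : Measurable DM) (hmeasT : Measurable Tidx)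
    (hπ : ∀ s, 1 ≤ s → s ≤ T → 0 < ν {ω' | Tidx ω' = s})
    (hlaw : ∀ s, 1 ≤ s → s ≤ T →
      Measure.map (fun ω' => (YM ω', ZM ω', DM ω')) (ν[|{ω' | Tidx ω' = s}])
        = Measure.map (fun ω => (Y s ω, Z ω, D ω)) μ)
    (t : ℕ) (ht : 3 ≤ t) (htT : t ≤ T) (β : Fin KX → ℝ) (Ft : ℝ)
    (hintM : ∀ k, Integrable (fun ω' => (1 - DM ω') * ZM ω' k *
      ((if Tidx ω' = t then (1:ℝ) else 0) / (ν {ω' | Tidx ω' = t}).toReal * YM ω'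
        - (if Tidx ω' = 1 then (1:ℝ) else 0) / (ν {ω' | Tidx ω' = 1}).toReal * YM ω'
        - (∑ j, ZM ω' (Sum.inl j) * β j)
        - Ft * ((if Tidx ω' = 2 then (1:ℝ) else 0) / (ν {ω' | Tidx ω' = 2}).toReal * YM ω'
            - (if Tidx ω' = 1 then (1:ℝ) else 0) / (ν {ω' | Tidx ω' = 1}).toReal * YM ω'))) ν)
    (hintPY : ∀ s, 1 ≤ s → s ≤ T → ∀ k,
      Integrable (fun ω => (1 - D ω) * Z ω k * Y s ω) μ)
    (hintPZ : ∀ k j, Integrable (fun ω => (1 - D ω) * Z ω k * Z ω (Sum.inl j)) μ) :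
    (∀ k, ∫ ω', (1 - DM ω') * ZM ω' k *
        ((if Tidx ω' = t then (1:ℝ) else 0) / (ν {ω' | Tidx ω' = t}).toReal * YM ω'
          - (if Tidx ω' = 1 then (1:ℝ) else 0) / (ν {ω' | Tidx ω' = 1}).toReal * YM ω'
          - (∑ j, ZM ω' (Sum.inl j) * β j)
          - Ft * ((if Tidx ω' = 2 then (1:ℝ) else 0) / (ν {ω' | Tidx ω' = 2}).toReal * YM ω'
              - (if Tidx ω' = 1 then (1:ℝ) else 0) / (ν {ω' | Tidx ω' = 1}).toReal * YM ω')) ∂ν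
      = ∫ ω, (1 - D ω) * Z ω k *
          (Y t ω - Y 1 ω - (∑ j, Z ω (Sum.inl j) * β j) - Ft * (Y 2 ω - Y 1 ω)) ∂μ) ∧
    ((∀ k, ∫ ω, (1 - D ω) * Z ω k *
        (Y t ω - Y 1 ω - (∑ j, Z ω (Sum.inl j) * β j) - Ft * (Y 2 ω - Y 1 ω)) ∂μ = 0) →
      ∀ k, ∫ ω', (1 - DM ω') * ZM ω' k *
        ((if Tidx ω' = t then (1:ℝ) else 0) / (ν {ω' | Tidx ω' = t}).toReal * YM ω'
          - (if Tidx ω' = 1 then (1:ℝ) else 0) / (ν {ω' | Tidx ω' = 1}).toReal * YM ω'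
          - (∑ j, ZM ω' (Sum.inl j) * β j)
          - Ft * ((if Tidx ω' = 2 then (1:ℝ) else 0) / (ν {ω' | Tidx ω' = 2}).toReal * YM ω'
              - (if Tidx ω' = 1 then (1:ℝ) else 0) / (ν {ω' | Tidx ω' = 1}).toReal * YM ω')) ∂ν = 0) := by
  have hmem : ∀ {s}, 1 ≤ s → s ≤ T → s ∈ Finset.Icc 1 T := fun h1 h2 =>
    Finset.mem_Icc.2 ⟨h1, h2⟩
  have hνs : ∀ {s}, 1 ≤ s → s ≤ T → ν {ω' | Tidx ω' = s} ≠ 0 := fun h1 h2 => (hπ _ h1 h2).ne'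
  refine (fun key => ⟨key, fun h0 k => (key k).trans (h0 k)⟩) fun k => ?_
  have hintZβ : Integrable (fun ω => (1 - D ω) * Z ω k * ∑ j, Z ω (Sum.inl j) * β j) μ := by
    simp only [Finset.mul_sum, ← mul_assoc]
    exact integrable_finsetSum _ fun j _ => (hintPZ k j).mul_const (β j)
  exact integral_ipw_contrast_eq hmeasT (fun ω' => hmem (hTrange ω').1 (hTrange ω').2)
    (hmem le_rfl (by omega)) (hmem (by omega) (by omega)) (hmem (by omega) htT)
    (hνs le_rfl (by omega)) (hνs (by omega) (by omega)) (hνs (by omega) htT)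
    hmeasYM (hmeasZM.prodMk hmeasDM) hmeasY (hmeasZ.prodMk hmeasD)
    (fun s hs => hlaw s (Finset.mem_Icc.1 hs).1 (Finset.mem_Icc.1 hs).2)
    (g := fun u => (1 - u.2) * u.1 k) (h := fun u => ∑ j, u.1 (Sum.inl j) * β j)
    (by fun_prop) (by fun_prop) Ft (hintM k)
    (fun s hs => hintPY s (Finset.mem_Icc.1 hs).1 (Finset.mem_Icc.1 hs).2 k) hintZβ

/-- Conversion of panel moment conditions to repeated cross
sections moment conditions. If for every `t` the law of `(Y, Z_M, D_M)` under
`P_M(·|T_idx = t)` equals the law of `(Y_t, Z, D)` under `P`, with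
`π_t := P_M(T_idx = t) > 0`, then for every `t ≥ 3`, `β_t`, and `F_t`, the
repeated cross sections moment expression equals the panel moment expression;
in particular, if the latter vanishes so does the former. -/
theorem statement14
    {Ω Ω' : Type*} [MeasurableSpace Ω] [MeasurableSpace Ω']
    (μ : Measure Ω) [IsProbabilityMeasure μ]
    (ν : Measure Ω') [IsProbabilityMeasure ν]
    (T KX KW : ℕ) (hT : 3 ≤ T)
    (Y : ℕ → Ω → ℝ) (Z : Ω → (Fin KX ⊕ Fin KW) → ℝ) (D : Ω → ℝ)
    (YM : Ω' → ℝ) (ZM : Ω' → (Fin KX ⊕ Fin KW) → ℝ) (DM : Ω' → ℝ)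
    (Tidx : Ω' → ℕ)
    (hD : ∀ ω, D ω = 0 ∨ D ω = 1) (hDM : ∀ ω', DM ω' = 0 ∨ DM ω' = 1)
    (hTrange : ∀ ω', 1 ≤ Tidx ω' ∧ Tidx ω' ≤ T)
    (hmeasY : ∀ s, Measurable (Y s)) (hmeasZ : Measurable Z)
    (hmeasD : Measurable D)
    (hmeasYM : Measurable YM) (hmeasZM : Measurable ZM)
    (hmeasDM : Measurable DM) (hmeasT : Measurable Tidx)
    (hπ : ∀ s, 1 ≤ s → s ≤ T → 0 < ν {ω' | Tidx ω' = s})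
    (hlaw : ∀ s, 1 ≤ s → s ≤ T →
      Measure.map (fun ω' => (YM ω', ZM ω', DM ω')) (ν[|{ω' | Tidx ω' = s}])
        = Measure.map (fun ω => (Y s ω, Z ω, D ω)) μ)
    (t : ℕ) (ht : 3 ≤ t) (htT : t ≤ T) (β : Fin KX → ℝ) (Ft : ℝ)
    (hintM : ∀ k, Integrable (fun ω' => (1 - DM ω') * ZM ω' k *
      ((if Tidx ω' = t then (1:ℝ) else 0) / (ν {ω' | Tidx ω' = t}).toReal * YM ω'
        - (if Tidx ω' = 1 then (1:ℝ) else 0) / (ν {ω' | Tidx ω' = 1}).toReal * YM ω'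
        - (∑ j, ZM ω' (Sum.inl j) * β j)
        - Ft * ((if Tidx ω' = 2 then (1:ℝ) else 0) / (ν {ω' | Tidx ω' = 2}).toReal * YM ω'
            - (if Tidx ω' = 1 then (1:ℝ) else 0) / (ν {ω' | Tidx ω' = 1}).toReal * YM ω'))) ν)
    (hintP : ∀ k, Integrable (fun ω => (1 - D ω) * Z ω k *
      (Y t ω - Y 1 ω - (∑ j, Z ω (Sum.inl j) * β j) - Ft * (Y 2 ω - Y 1 ω))) μ)
    (hintPY : ∀ s, 1 ≤ s → s ≤ T → ∀ k,
      Integrable (fun ω => (1 - D ω) * Z ω k * Y s ω) μ)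
    (hintPZ : ∀ k j, Integrable (fun ω => (1 - D ω) * Z ω k * Z ω (Sum.inl j)) μ) :
    (∀ k, ∫ ω', (1 - DM ω') * ZM ω' k *
        ((if Tidx ω' = t then (1:ℝ) else 0) / (ν {ω' | Tidx ω' = t}).toReal * YM ω'
          - (if Tidx ω' = 1 then (1:ℝ) else 0) / (ν {ω' | Tidx ω' = 1}).toReal * YM ω'
          - (∑ j, ZM ω' (Sum.inl j) * β j)
          - Ft * ((if Tidx ω' = 2 then (1:ℝ) else 0) / (ν {ω' | Tidx ω' = 2}).toReal * YM ω'
              - (if Tidx ω' = 1 then (1:ℝ) else 0) / (ν {ω' | Tidx ω' = 1}).toReal * YM ω')) ∂ν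
      = ∫ ω, (1 - D ω) * Z ω k *
          (Y t ω - Y 1 ω - (∑ j, Z ω (Sum.inl j) * β j) - Ft * (Y 2 ω - Y 1 ω)) ∂μ) ∧
    ((∀ k, ∫ ω, (1 - D ω) * Z ω k *
        (Y t ω - Y 1 ω - (∑ j, Z ω (Sum.inl j) * β j) - Ft * (Y 2 ω - Y 1 ω)) ∂μ = 0) →
      ∀ k, ∫ ω', (1 - DM ω') * ZM ω' k *
        ((if Tidx ω' = t then (1:ℝ) else 0) / (ν {ω' | Tidx ω' = t}).toReal * YM ω'
          - (if Tidx ω' = 1 then (1:ℝ) else 0) / (ν {ω' | Tidx ω' = 1}).toReal * YM ω'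
          - (∑ j, ZM ω' (Sum.inl j) * β j)
          - Ft * ((if Tidx ω' = 2 then (1:ℝ) else 0) / (ν {ω' | Tidx ω' = 2}).toReal * YM ω'
              - (if Tidx ω' = 1 then (1:ℝ) else 0) / (ν {ω' | Tidx ω' = 1}).toReal * YM ω')) ∂ν = 0) :=
  statement14_general μ ν T KX KW Y Z D YM ZM DM Tidx hTrange hmeasY hmeasZ hmeasD hmeasYM hmeasZM
    hmeasDM hmeasT hπ hlaw t ht htT β Ft hintM hintPY hintPZ
end

section
/- Theorem 2 (identification of the ATT with repeated cross sections data). In the two-space setup linking the panel and mixture distributions (for every t, the law of (Y, Z_M, D_M) under P_M( · | T_idx = t ) equals the law of (Y_t, Z, D) under P, with π_t := P_M(T_idx = t) > 0), suppose additionally that on the panel space, pointwise, Y_t(0) = ξ + λ·F_t + X'β_t + W'α + U_t for every t, with normalizations F_1 = 0, F_2 = 1, β_1 = β_2 = 0 and α constant across periods; Y_1 = Y_1(0) and Y_2 = Y_2(0) pointwise; Y_t = Y_t(1) on {D=1} for the post-treatment period t ≥ t*; P(D=1) > 0; and E[U_s | D=1] = 0 for s ∈ {1,2,t}. Then P_M(D_M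 = 1) = P(D=1) > 0 and ATT_t = E_M[ (T_t/π_t)·Y | D_M=1 ] − ( E_M[ (T_1/π_1)·Y | D_M=1 ] + E_M[ X_M | D_M=1 ]·β_t + F_t·( E_M[ (T_2/π_2)·Y | D_M=1 ] − E_M[ (T_1/π_1)·Y | D_M=1 ] ) ), where T_t := 1{T_idx = t}. -/
open MeasureTheory ProbabilityTheory

/-- Theorem 2: identification of the ATT with repeated cross
sections data. In the two-space setup linking the panel and mixture
distributions, under the IFE model on the panel space with the normalizations,
observation rules, `P(D=1) > 0`, and `E[U_s|D=1] = 0` for `s ∈ {1,2,t}`, we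
have `P_M(D_M = 1) = P(D = 1) > 0` and the ATT is identified from the mixture
distribution by the displayed formula. -/
theorem statement15
    {Ω Ω' : Type*} [MeasurableSpace Ω] [MeasurableSpace Ω']
    (μ : Measure Ω) [IsProbabilityMeasure μ]
    (ν : Measure Ω') [IsProbabilityMeasure ν]
    (T KX KW tstar t : ℕ) (hT : 3 ≤ T) (htstar : 3 ≤ tstar) (ht : tstar ≤ t)
    (htT : t ≤ T)
    (Y0 Y1p Y U : ℕ → Ω → ℝ) (ξ lam : Ω → ℝ)
    (Z : Ω → (Fin KX ⊕ Fin KW) → ℝ) (D : Ω → ℝ)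
    (F : ℕ → ℝ) (β : ℕ → Fin KX → ℝ) (α : Fin KW → ℝ)
    (YM : Ω' → ℝ) (ZM : Ω' → (Fin KX ⊕ Fin KW) → ℝ) (DM : Ω' → ℝ)
    (Tidx : Ω' → ℕ)
    (hD : ∀ ω, D ω = 0 ∨ D ω = 1) (hDM : ∀ ω', DM ω' = 0 ∨ DM ω' = 1)
    (hTrange : ∀ ω', 1 ≤ Tidx ω' ∧ Tidx ω' ≤ T)
    (hmeasY : ∀ s, Measurable (Y s)) (hmeasZ : Measurable Z)
    (hmeasD : Measurable D)
    (hmeasYM : Measurable YM) (hmeasZM : Measurable ZM)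
    (hmeasDM : Measurable DM) (hmeasT : Measurable Tidx)
    (hπ : ∀ s, 1 ≤ s → s ≤ T → 0 < ν {ω' | Tidx ω' = s})
    (hlaw : ∀ s, 1 ≤ s → s ≤ T →
      Measure.map (fun ω' => (YM ω', ZM ω', DM ω')) (ν[|{ω' | Tidx ω' = s}])
        = Measure.map (fun ω => (Y s ω, Z ω, D ω)) μ)
    (hmodel : ∀ s, 1 ≤ s → s ≤ T → ∀ ω,
      Y0 s ω = ξ ω + lam ω * F s + (∑ i, Z ω (Sum.inl i) * β s i)
        + (∑ j, Z ω (Sum.inr j) * α j) + U s ω)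
    (hF1 : F 1 = 0) (hF2 : F 2 = 1) (hβ1 : β 1 = 0) (hβ2 : β 2 = 0)
    (hY1 : ∀ ω, Y 1 ω = Y0 1 ω) (hY2 : ∀ ω, Y 2 ω = Y0 2 ω)
    (hYt : ∀ ω, D ω = 1 → Y t ω = Y1p t ω)
    (hpos : 0 < μ {ω | D ω = 1})
    (hU : ∀ s, s = 1 ∨ s = 2 ∨ s = t →
      ∫ ω, U s ω ∂μ[|{ω | D ω = 1}] = 0)
    (hintY : ∀ s, s = 1 ∨ s = 2 ∨ s = t →
      Integrable (Y s) (μ[|{ω | D ω = 1}]))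
    (hintY0 : Integrable (Y0 t) (μ[|{ω | D ω = 1}]))
    (hintY1p : Integrable (Y1p t) (μ[|{ω | D ω = 1}]))
    (hintU : ∀ s, s = 1 ∨ s = 2 ∨ s = t →
      Integrable (U s) (μ[|{ω | D ω = 1}]))
    (hintZ : ∀ k, Integrable (fun ω => Z ω k) (μ[|{ω | D ω = 1}]))
    (hintξ : Integrable ξ (μ[|{ω | D ω = 1}]))
    (hintlam : Integrable lam (μ[|{ω | D ω = 1}]))
    (hintM : ∀ s, s = 1 ∨ s = 2 ∨ s = t →
      Integrable (fun ω' =>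
        (if Tidx ω' = s then (1:ℝ) else 0) / (ν {ω' | Tidx ω' = s}).toReal * YM ω')
        (ν[|{ω' | DM ω' = 1}]))
    (hintMZ : ∀ k, Integrable (fun ω' => ZM ω' k) (ν[|{ω' | DM ω' = 1}])) :
    ν {ω' | DM ω' = 1} = μ {ω | D ω = 1} ∧
    0 < ν {ω' | DM ω' = 1} ∧
    ∫ ω, (Y1p t ω - Y0 t ω) ∂μ[|{ω | D ω = 1}]
      = ∫ ω', (if Tidx ω' = t then (1:ℝ) else 0)
            / (ν {ω' | Tidx ω' = t}).toReal * YM ω' ∂ν[|{ω' | DM ω' = 1}]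
        - (∫ ω', (if Tidx ω' = 1 then (1:ℝ) else 0)
              / (ν {ω' | Tidx ω' = 1}).toReal * YM ω' ∂ν[|{ω' | DM ω' = 1}]
          + (∑ i, (∫ ω', ZM ω' (Sum.inl i) ∂ν[|{ω' | DM ω' = 1}]) * β t i)
          + F t * (∫ ω', (if Tidx ω' = 2 then (1:ℝ) else 0)
                / (ν {ω' | Tidx ω' = 2}).toReal * YM ω' ∂ν[|{ω' | DM ω' = 1}]
              - ∫ ω', (if Tidx ω' = 1 then (1:ℝ) else 0)
                / (ν {ω' | Tidx ω' = 1}).toReal * YM ω' ∂ν[|{ω' | DM ω' = 1}])) := by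
  classical
  have ht1 : 1 ≤ t := by omega
  set A : Set Ω := {ω | D ω = 1} with hAdef
  set B : Set Ω' := {ω' | DM ω' = 1} with hBdef
  have hAm : MeasurableSet A := hmeasD (measurableSet_singleton (1:ℝ))
  have hBm : MeasurableSet B := hmeasDM (measurableSet_singleton (1:ℝ))
  have hCm : ∀ s : ℕ, MeasurableSet {ω' | Tidx ω' = s} := fun s =>
    hmeasT (measurableSet_singleton s)
  have hAne : μ A ≠ 0 := hpos.ne'
  have hAnt : μ A ≠ ⊤ := measure_ne_top μ A
  have hπne : ∀ s, 1 ≤ s → s ≤ T → ν {ω' | Tidx ω' = s} ≠ 0 := fun s h1 h2 => (hπ s h1 h2).ne'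
  have hπnt : ∀ s : ℕ, ν {ω' | Tidx ω' = s} ≠ ⊤ := fun s => measure_ne_top ν _
  have hφM : Measurable fun ω' => (YM ω', ZM ω', DM ω') :=
    hmeasYM.prodMk (hmeasZM.prodMk hmeasDM)
  have hφ : ∀ s, Measurable fun ω => (Y s ω, Z ω, D ω) := fun s =>
    (hmeasY s).prodMk (hmeasZ.prodMk hmeasD)
  -- transfer of integrals
  have key : ∀ s, 1 ≤ s → s ≤ T → ∀ g : ℝ × ((Fin KX ⊕ Fin KW) → ℝ) × ℝ → ℝ, Measurable g →
      ∫ ω', g (YM ω', ZM ω', DM ω') ∂(ν[|{ω' | Tidx ω' = s}]) = ∫ ω, g (Y s ω, Z ω, D ω) ∂μ := by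
    intro s hs1 hsT g hg
    rw [← integral_map hφM.aemeasurable hg.aestronglyMeasurable, hlaw s hs1 hsT,
      integral_map (hφ s).aemeasurable hg.aestronglyMeasurable]
  have hSm : MeasurableSet {p : ℝ × ((Fin KX ⊕ Fin KW) → ℝ) × ℝ | p.2.2 = 1} :=
    (measurable_snd.comp measurable_snd) (measurableSet_singleton (1:ℝ))
  -- transfer of the treated probability
  have keyB : ∀ s, 1 ≤ s → s ≤ T → (ν[|{ω' | Tidx ω' = s}]) B = μ A := by
    intro s hs1 hsT
    have h1 := congrArg (fun m : Measure (ℝ × ((Fin KX ⊕ Fin KW) → ℝ) × ℝ) =>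
      m {p | p.2.2 = 1}) (hlaw s hs1 hsT)
    rw [Measure.map_apply hφM hSm, Measure.map_apply (hφ s) hSm] at h1
    exact h1
  -- conditional integral formulas
  have hcondμ : ∀ f : Ω → ℝ, ∫ ω, f ω ∂μ[|A] = (μ A).toReal⁻¹ * ∫ ω in A, f ω ∂μ := by
    intro f
    rw [ProbabilityTheory.cond, integral_smul_measure, ENNReal.toReal_inv, smul_eq_mul]
  have hcondν : ∀ (S : Set Ω') (f : Ω' → ℝ),
      ∫ ω', f ω' ∂ν[|S] = (ν S).toReal⁻¹ * ∫ ω' in S, f ω' ∂ν := by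
    intro S f
    rw [ProbabilityTheory.cond, integral_smul_measure, ENNReal.toReal_inv, smul_eq_mul]
  -- partition facts
  have hdisj : (↑(Finset.Icc 1 T) : Set ℕ).PairwiseDisjoint
      (fun s => {ω' : Ω' | Tidx ω' = s}) := by
    intro a _ b _ hab
    rw [Function.onFun, Set.disjoint_left]
    intro x hx hx'
    exact hab (hx.symm.trans hx')
  have hcover : Set.univ = ⋃ s ∈ Finset.Icc 1 T, {ω' : Ω' | Tidx ω' = s} := by
    ext x
    simp only [Set.mem_univ, Set.mem_iUnion, Set.mem_setOf_eq, Finset.mem_Icc, true_iff]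
    exact ⟨Tidx x, ⟨(hTrange x).1, (hTrange x).2⟩, rfl⟩
  have hsum1 : ∑ s ∈ Finset.Icc 1 T, ν {ω' | Tidx ω' = s} = 1 := by
    rw [← measure_biUnion_finset hdisj (fun s _ => hCm s), ← hcover, measure_univ]
  have hterm : ∀ s, 1 ≤ s → s ≤ T →
      ν (B ∩ {ω' | Tidx ω' = s}) = ν {ω' | Tidx ω' = s} * μ A := by
    intro s hs1 hsT
    have h1 := cond_apply (μ := ν) (hCm s) B
    rw [keyB s hs1 hsT] at h1
    have h2 := congrArg (fun x => ν {ω' | Tidx ω' = s} * x) h1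
    rw [← mul_assoc, ENNReal.mul_inv_cancel (hπne s hs1 hsT) (hπnt s), one_mul] at h2
    rw [Set.inter_comm] at h2
    exact h2.symm
  -- Part 1 : ν B = μ A
  have hνB : ν B = μ A := by
    have hBcover : B = ⋃ s ∈ Finset.Icc 1 T, (B ∩ {ω' : Ω' | Tidx ω' = s}) := by
      rw [← Set.inter_iUnion₂, ← hcover, Set.inter_univ]
    have hdisj' : (↑(Finset.Icc 1 T) : Set ℕ).PairwiseDisjoint
        (fun s => B ∩ {ω' : Ω' | Tidx ω' = s}) := fun a ha b hb hab =>
      ((hdisj ha hb hab).mono Set.inter_subset_right Set.inter_subset_right)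
    calc ν B = ∑ s ∈ Finset.Icc 1 T, ν (B ∩ {ω' | Tidx ω' = s}) := by
          conv_lhs => rw [hBcover]
          exact measure_biUnion_finset hdisj' (fun s _ => hBm.inter (hCm s))
      _ = ∑ s ∈ Finset.Icc 1 T, ν {ω' | Tidx ω' = s} * μ A := by
          refine Finset.sum_congr rfl fun s hs => ?_
          rw [Finset.mem_Icc] at hs
          exact hterm s hs.1 hs.2
      _ = (∑ s ∈ Finset.Icc 1 T, ν {ω' | Tidx ω' = s}) * μ A := by rw [Finset.sum_mul]
      _ = μ A := by rw [hsum1, one_mul]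
  have hνBne : ν B ≠ 0 := by rw [hνB]; exact hAne
  -- moment transfer for the outcome
  have hsetY : ∀ s, 1 ≤ s → s ≤ T →
      ∫ ω' in B ∩ {ω' | Tidx ω' = s}, YM ω' ∂ν
        = (ν {ω' | Tidx ω' = s}).toReal * ∫ ω in A, Y s ω ∂μ := by
    intro s hs1 hsT
    have hg : Measurable fun p : ℝ × ((Fin KX ⊕ Fin KW) → ℝ) × ℝ =>
        (if p.2.2 = 1 then (1:ℝ) else 0) * p.1 :=
      (Measurable.ite hSm measurable_const measurable_const).mul measurable_fst
    have h1 := key s hs1 hsT _ hg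
    simp only at h1
    have hL : ∫ ω', (if DM ω' = 1 then (1:ℝ) else 0) * YM ω' ∂ν[|{ω' | Tidx ω' = s}]
        = (ν {ω' | Tidx ω' = s}).toReal⁻¹ * ∫ ω' in {ω' | Tidx ω' = s} ∩ B, YM ω' ∂ν := by
      rw [hcondν]
      congr 1
      rw [← setIntegral_indicator hBm]
      refine setIntegral_congr_fun (hCm s) fun x _ => ?_
      simp only [Set.indicator_apply]
      by_cases h : DM x = 1 <;> simp [hBdef, Set.mem_setOf_eq, h]
    have hR : ∫ ω, (if D ω = 1 then (1:ℝ) else 0) * Y s ω ∂μ = ∫ ω in A, Y s ω ∂μ := by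
      rw [← integral_indicator hAm]
      refine integral_congr_ae (Filter.Eventually.of_forall fun x => ?_)
      simp only [Set.indicator_apply]
      by_cases h : D x = 1 <;> simp [hAdef, Set.mem_setOf_eq, h]
    rw [hL, hR] at h1
    have hπpos : 0 < (ν {ω' | Tidx ω' = s}).toReal :=
      ENNReal.toReal_pos (hπne s hs1 hsT) (hπnt s)
    rw [Set.inter_comm]
    field_simp at h1 ⊢
    linarith [h1]
  -- moment transfer for the covariates
  have hsetZ : ∀ (k : Fin KX ⊕ Fin KW) s, 1 ≤ s → s ≤ T →
      ∫ ω' in B ∩ {ω' | Tidx ω' = s}, ZM ω' k ∂ν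
        = (ν {ω' | Tidx ω' = s}).toReal * ∫ ω in A, Z ω k ∂μ := by
    intro k s hs1 hsT
    have hg : Measurable fun p : ℝ × ((Fin KX ⊕ Fin KW) → ℝ) × ℝ =>
        (if p.2.2 = 1 then (1:ℝ) else 0) * p.2.1 k :=
      (Measurable.ite hSm measurable_const measurable_const).mul
        ((measurable_pi_apply k).comp (measurable_fst.comp measurable_snd))
    have h1 := key s hs1 hsT _ hg
    simp only at h1
    have hL : ∫ ω', (if DM ω' = 1 then (1:ℝ) else 0) * ZM ω' k ∂ν[|{ω' | Tidx ω' = s}]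
        = (ν {ω' | Tidx ω' = s}).toReal⁻¹ * ∫ ω' in {ω' | Tidx ω' = s} ∩ B, ZM ω' k ∂ν := by
      rw [hcondν]
      congr 1
      rw [← setIntegral_indicator hBm]
      refine setIntegral_congr_fun (hCm s) fun x _ => ?_
      simp only [Set.indicator_apply]
      by_cases h : DM x = 1 <;> simp [hBdef, Set.mem_setOf_eq, h]
    have hR : ∫ ω, (if D ω = 1 then (1:ℝ) else 0) * Z ω k ∂μ = ∫ ω in A, Z ω k ∂μ := by
      rw [← integral_indicator hAm]
      refine integral_congr_ae (Filter.Eventually.of_forall fun x => ?_)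
      simp only [Set.indicator_apply]
      by_cases h : D x = 1 <;> simp [hAdef, Set.mem_setOf_eq, h]
    rw [hL, hR] at h1
    have hπpos : 0 < (ν {ω' | Tidx ω' = s}).toReal :=
      ENNReal.toReal_pos (hπne s hs1 hsT) (hπnt s)
    rw [Set.inter_comm]
    field_simp at h1 ⊢
    linarith [h1]
  -- mixture expectation of (T_s / π_s) · Y given DM = 1
  have hmixY : ∀ s, 1 ≤ s → s ≤ T →
      ∫ ω', (if Tidx ω' = s then (1:ℝ) else 0) / (ν {ω' | Tidx ω' = s}).toReal * YM ω' ∂ν[|B]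
        = ∫ ω, Y s ω ∂μ[|A] := by
    intro s hs1 hsT
    have hπpos : 0 < (ν {ω' | Tidx ω' = s}).toReal :=
      ENNReal.toReal_pos (hπne s hs1 hsT) (hπnt s)
    rw [hcondν, hcondμ]
    have h2 : ∫ ω' in B, (if Tidx ω' = s then (1:ℝ) else 0)
          / (ν {ω' | Tidx ω' = s}).toReal * YM ω' ∂ν
        = (ν {ω' | Tidx ω' = s}).toReal⁻¹ * ∫ ω' in B ∩ {ω' | Tidx ω' = s}, YM ω' ∂ν := by
      rw [← setIntegral_indicator (hCm s), ← integral_const_mul]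
      refine setIntegral_congr_fun hBm fun x _ => ?_
      simp only [Set.indicator_apply, Set.mem_setOf_eq]
      by_cases h : Tidx x = s <;> simp [h] <;> ring
    rw [h2, hsetY s hs1 hsT, hνB]
    field_simp
  -- mixture expectation of covariates given DM = 1
  have hmixZ : ∀ k : Fin KX ⊕ Fin KW,
      ∫ ω', ZM ω' k ∂ν[|B] = ∫ ω, Z ω k ∂μ[|A] := by
    intro k
    have hint : IntegrableOn (fun ω' => ZM ω' k) B ν := by
      have h : Integrable (fun ω' => ZM ω' k) ((ν B)⁻¹ • ν.restrict B) := hintMZ k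
      exact (integrable_smul_measure (ENNReal.inv_ne_zero.mpr (measure_ne_top ν B))
        (ENNReal.inv_ne_top.mpr hνBne)).mp h
    have hBcover : B = ⋃ s ∈ Finset.Icc 1 T, (B ∩ {ω' : Ω' | Tidx ω' = s}) := by
      rw [← Set.inter_iUnion₂, ← hcover, Set.inter_univ]
    have hdisj' : (↑(Finset.Icc 1 T) : Set ℕ).PairwiseDisjoint
        (fun s => B ∩ {ω' : Ω' | Tidx ω' = s}) := fun a ha b hb hab =>
      ((hdisj ha hb hab).mono Set.inter_subset_right Set.inter_subset_right)
    have hsplit : ∫ ω' in B, ZM ω' k ∂ν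
        = ∑ s ∈ Finset.Icc 1 T, ∫ ω' in B ∩ {ω' | Tidx ω' = s}, ZM ω' k ∂ν := by
      conv_lhs => rw [hBcover]
      exact integral_biUnion_finset _ (fun s _ => hBm.inter (hCm s)) hdisj'
        (fun s _ => hint.mono_set Set.inter_subset_left)
    have hsumr : ∑ s ∈ Finset.Icc 1 T, (ν {ω' | Tidx ω' = s}).toReal = 1 := by
      rw [← ENNReal.toReal_sum (fun s _ => hπnt s), hsum1, ENNReal.toReal_one]
    rw [hcondν, hcondμ, hsplit]
    have : ∑ s ∈ Finset.Icc 1 T, ∫ ω' in B ∩ {ω' | Tidx ω' = s}, ZM ω' k ∂ν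
        = (∑ s ∈ Finset.Icc 1 T, (ν {ω' | Tidx ω' = s}).toReal) * ∫ ω in A, Z ω k ∂μ := by
      rw [Finset.sum_mul]
      refine Finset.sum_congr rfl fun s hs => ?_
      rw [Finset.mem_Icc] at hs
      exact hsetZ k s hs.1 hs.2
    rw [this, hsumr, one_mul, hνB]
  -- integrabilities on the panel side
  have hIsum1 : Integrable (fun ω => ∑ i, Z ω (Sum.inl i) * β t i) (μ[|A]) :=
    integrable_finset_sum _ (fun i _ => (hintZ (Sum.inl i)).mul_const _)
  -- expectation of the untreated model
  have hEY0 : ∀ s, 1 ≤ s → s ≤ T → (s = 1 ∨ s = 2 ∨ s = t) →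
      ∫ ω, Y0 s ω ∂μ[|A]
        = (∫ ω, ξ ω ∂μ[|A]) + (∫ ω, lam ω ∂μ[|A]) * F s
          + (∑ i, (∫ ω, Z ω (Sum.inl i) ∂μ[|A]) * β s i)
          + (∑ j, (∫ ω, Z ω (Sum.inr j) ∂μ[|A]) * α j) := by
    intro s hs1 hsT hmem
    have I1 : Integrable ξ (μ[|A]) := hintξ
    have I2 : Integrable (fun ω => lam ω * F s) (μ[|A]) := hintlam.mul_const _
    have I3 : Integrable (fun ω => ∑ i, Z ω (Sum.inl i) * β s i) (μ[|A]) :=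
      integrable_finset_sum _ (fun i _ => (hintZ (Sum.inl i)).mul_const _)
    have I4 : Integrable (fun ω => ∑ j, Z ω (Sum.inr j) * α j) (μ[|A]) :=
      integrable_finset_sum _ (fun j _ => (hintZ (Sum.inr j)).mul_const _)
    have I5 : Integrable (U s) (μ[|A]) := hintU s hmem
    have J2 : Integrable (fun ω => ξ ω + lam ω * F s) (μ[|A]) := I1.add I2
    have J3 : Integrable (fun ω => ξ ω + lam ω * F s
      + ∑ i, Z ω (Sum.inl i) * β s i) (μ[|A]) := J2.add I3
    have J4 : Integrable (fun ω => ξ ω + lam ω * F s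
      + ∑ i, Z ω (Sum.inl i) * β s i + ∑ j, Z ω (Sum.inr j) * α j) (μ[|A]) := J3.add I4
    calc ∫ ω, Y0 s ω ∂μ[|A]
        = ∫ ω, (ξ ω + lam ω * F s + (∑ i, Z ω (Sum.inl i) * β s i)
            + (∑ j, Z ω (Sum.inr j) * α j) + U s ω) ∂μ[|A] := by
          refine integral_congr_ae (Filter.Eventually.of_forall fun ω => ?_)
          exact hmodel s hs1 hsT ω
      _ = (∫ ω, ξ ω ∂μ[|A]) + (∫ ω, lam ω ∂μ[|A]) * F s
          + (∑ i, (∫ ω, Z ω (Sum.inl i) ∂μ[|A]) * β s i)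
          + (∑ j, (∫ ω, Z ω (Sum.inr j) ∂μ[|A]) * α j) := by
          rw [integral_add J4 I5, hU s hmem, add_zero,
            integral_add J3 I4, integral_add J2 I3,
            integral_add I1 I2, integral_mul_const,
            integral_finset_sum _ (fun i _ => (hintZ (Sum.inl i)).mul_const _),
            integral_finset_sum _ (fun j _ => (hintZ (Sum.inr j)).mul_const _)]
          congr 1
          · congr 1
            · exact Finset.sum_congr rfl fun i _ => integral_mul_const _ _
          · exact Finset.sum_congr rfl fun j _ => integral_mul_const _ _
  have h1T : (1:ℕ) ≤ T := by omega
  have h2T : (2:ℕ) ≤ T := by omega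
  -- period-1 and period-2 expectations
  have hEY1 : ∫ ω, Y 1 ω ∂μ[|A]
      = (∫ ω, ξ ω ∂μ[|A]) + (∑ j, (∫ ω, Z ω (Sum.inr j) ∂μ[|A]) * α j) := by
    have := hEY0 1 le_rfl h1T (Or.inl rfl)
    simp only [hY1]
    rw [this, hF1, hβ1]
    simp
  have hEY2 : ∫ ω, Y 2 ω ∂μ[|A]
      = (∫ ω, ξ ω ∂μ[|A]) + (∫ ω, lam ω ∂μ[|A])
        + (∑ j, (∫ ω, Z ω (Sum.inr j) ∂μ[|A]) * α j) := by
    have := hEY0 2 (by omega) h2T (Or.inr (Or.inl rfl))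
    simp only [hY2]
    rw [this, hF2, hβ2]
    simp
  have hEY0t : ∫ ω, Y0 t ω ∂μ[|A]
      = (∫ ω, ξ ω ∂μ[|A]) + (∫ ω, lam ω ∂μ[|A]) * F t
        + (∑ i, (∫ ω, Z ω (Sum.inl i) ∂μ[|A]) * β t i)
        + (∑ j, (∫ ω, Z ω (Sum.inr j) ∂μ[|A]) * α j) :=
    hEY0 t ht1 htT (Or.inr (Or.inr rfl))
  -- a.e. D = 1 under the conditional measure
  have haeA : ∀ᵐ ω ∂μ[|A], D ω = 1 := by
    rw [ae_iff]
    have h0 : (μ[|A]) {ω | ¬ D ω = 1} = 0 := by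
      rw [cond_apply hAm]
      have : A ∩ {ω | ¬ D ω = 1} = ∅ := by
        ext ω
        simp only [Set.mem_inter_iff, Set.mem_setOf_eq, Set.mem_empty_iff_false, hAdef]
        tauto
      rw [this, measure_empty, mul_zero]
    exact h0
  have hY1pt : ∫ ω, Y1p t ω ∂μ[|A] = ∫ ω, Y t ω ∂μ[|A] :=
    integral_congr_ae (haeA.mono fun ω h => (hYt ω h).symm)
  -- assemble
  refine ⟨hνB, by rw [hνB]; exact hpos, ?_⟩
  rw [integral_sub hintY1p hintY0, hY1pt, hmixY t ht1 htT, hmixY 1 le_rfl h1T,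
    hmixY 2 (by omega) h2T]
  have hZsum : (∑ i, (∫ ω', ZM ω' (Sum.inl i) ∂ν[|B]) * β t i)
      = ∑ i, (∫ ω, Z ω (Sum.inl i) ∂μ[|A]) * β t i :=
    Finset.sum_congr rfl fun i _ => by rw [hmixZ]
  rw [hZsum, hEY0t, hEY1, hEY2]
  ring
end

section
/- Theorem 4 (identification of the ATT with time-varying covariates under strict exogeneity). Suppose that, pointwise on the sample space, Y_t(0) = θ_t + ξ + λ·F_t + X_t'β + U_t for every t = 1,…,T, where X_t ∈ ℝ^{K_X} are time-varying covariates and the coefficient β ∈ ℝ^{K_X} does not vary over time, with normalizations θ_1 = θ_2 = 0, F_1 = 0, F_2 = 1. Suppose Y_1 = Y_1(0) and Y_2 = Y_2(0) pointwise; Y_t = Y_t(1) on {D=1} for t ≥ 3; P(D=1) > 0; and E[U_s | D=1] = 0 for s ∈ {1, 2, t}. Then for every t ≥ 3, ATT_t = E[Y_t | D=1] − ( θ_t + E[Y_1 | D=1] + E[X_t − X_1 | D=1]·β + F_t·E[Y_2 − Y_1 | D=1] − F_t·E[X_2 − X_1 | D=1]·β ). -/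
/-!
Take conditional means given `D = 1` in the model equation. Since `E[U_s | D = 1] = 0`, each
`E[Y_s(0) | D = 1]` is linear in the unknowns `E[ξ | D = 1]`, `E[λ | D = 1]` and the covariate
means; the normalizations turn periods 1 and 2 into `E[ξ | D = 1]` and `E[ξ + λ | D = 1]` (plus
covariate terms), which recovers `E[Y_t(0) | D = 1]` from observed quantities, while
`E[Y_t | D = 1] = E[Y_t(1) | D = 1]` because `Y_t = Y_t(1)` on `{D = 1}`.
-/

open MeasureTheory ProbabilityTheory

section Conditioning

variable {Ω : Type*} [MeasurableSpace Ω] {μ : Measure Ω} {s : Set Ω}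

/-- `s` need not be measurable, and then `μ[|s]` need not be carried by `s`; it still vanishes on
measurable sets disjoint from `s`, hence on null measurable ones. -/
lemma cond_eq_zero_of_disjoint {t : Set Ω} (ht : NullMeasurableSet t (μ[|s]))
    (hst : Disjoint s t) : μ[t | s] = 0 := by
  obtain ⟨t', ht't, ht', htt'⟩ := ht.exists_measurable_subset_ae_eq
  rw [← measure_congr htt', cond_apply' ht',
    Set.disjoint_iff_inter_eq_empty.mp (hst.mono_right ht't), measure_empty, mul_zero]

lemma ae_cond_of_forall_mem {p : Ω → Prop} (hp : NullMeasurableSet {ω | p ω} (μ[|s]))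
    (h : ∀ ω ∈ s, p ω) : ∀ᵐ ω ∂μ[|s], p ω :=
  ae_iff.mpr <| cond_eq_zero_of_disjoint hp.compl <|
    Set.disjoint_left.mpr fun ω hω hpω => hpω (h ω hω)

lemma integral_cond_congr {f g : Ω → ℝ} (hf : AEStronglyMeasurable f (μ[|s]))
    (hg : AEStronglyMeasurable g (μ[|s])) (h : ∀ ω ∈ s, f ω = g ω) :
    ∫ ω, f ω ∂μ[|s] = ∫ ω, g ω ∂μ[|s] :=
  integral_congr_ae (ae_cond_of_forall_mem (μ := μ) (s := s) (p := fun ω => f ω = g ω)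
    (hf.nullMeasurableSet_eq_fun hg) h)

end Conditioning

section LinearModel

variable {Ω ι : Type*} [MeasurableSpace Ω] [Fintype ι] {ν : Measure Ω}

lemma integral_factor_model [IsProbabilityMeasure ν] (θ F : ℝ) (β : ι → ℝ)
    {ξ lam U : Ω → ℝ} {X : Ω → ι → ℝ} (hξ : Integrable ξ ν) (hlam : Integrable lam ν)
    (hX : ∀ i, Integrable (fun ω => X ω i) ν) (hU : Integrable U ν) :
    ∫ ω, (θ + ξ ω + lam ω * F + (∑ i, X ω i * β i) + U ω) ∂ν
      = θ + ∫ ω, ξ ω ∂ν + (∫ ω, lam ω ∂ν) * F + (∑ i, (∫ ω, X ω i ∂ν) * β i)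
        + ∫ ω, U ω ∂ν := by
  have hXβ : ∀ i ∈ Finset.univ, Integrable (fun ω => X ω i * β i) ν :=
    fun i _ => (hX i).mul_const (β i)
  have hsum : Integrable (fun ω => ∑ i, X ω i * β i) ν := integrable_finsetSum _ hXβ
  have hθξ : Integrable (fun ω => θ + ξ ω) ν := (integrable_const θ).add hξ
  have hθξlam : Integrable (fun ω => θ + ξ ω + lam ω * F) ν := hθξ.add (hlam.mul_const F)
  have hall : Integrable (fun ω => θ + ξ ω + lam ω * F + ∑ i, X ω i * β i) ν :=
    hθξlam.add hsum
  rw [integral_add hall hU, integral_add hθξlam hsum,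
    integral_add hθξ (hlam.mul_const F), integral_add (integrable_const θ) hξ, integral_const,
    probReal_univ, one_smul, integral_mul_const, integral_finsetSum _ hXβ]
  simp only [integral_mul_const]

lemma sum_integral_sub_mul {f g : Ω → ι → ℝ} (hf : ∀ i, Integrable (fun ω => f ω i) ν)
    (hg : ∀ i, Integrable (fun ω => g ω i) ν) (β : ι → ℝ) :
    ∑ i, (∫ ω, (f ω i - g ω i) ∂ν) * β i
      = ∑ i, (∫ ω, f ω i ∂ν) * β i - ∑ i, (∫ ω, g ω i ∂ν) * β i := by
  rw [← Finset.sum_sub_distrib]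
  exact Finset.sum_congr rfl fun i _ => by rw [integral_sub (hf i) (hg i), sub_mul]

end LinearModel

theorem statement18_general
    {Ω : Type*} [MeasurableSpace Ω] (μ : Measure Ω) [IsProbabilityMeasure μ]
    (T KX t : ℕ) (ht : 3 ≤ t) (htT : t ≤ T)
    (Y0 Y1p Y U : ℕ → Ω → ℝ) (ξ lam : Ω → ℝ)
    (X : ℕ → Ω → Fin KX → ℝ) (D : Ω → ℝ)
    (θ F : ℕ → ℝ) (β : Fin KX → ℝ)
    (hmodel : ∀ s, 1 ≤ s → s ≤ T → ∀ ω,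
      Y0 s ω = θ s + ξ ω + lam ω * F s + (∑ i, X s ω i * β i) + U s ω)
    (hθ1 : θ 1 = 0) (hθ2 : θ 2 = 0) (hF1 : F 1 = 0) (hF2 : F 2 = 1)
    (hY1 : ∀ ω, Y 1 ω = Y0 1 ω) (hY2 : ∀ ω, Y 2 ω = Y0 2 ω)
    (hYt : ∀ s, 3 ≤ s → s ≤ T → ∀ ω, D ω = 1 → Y s ω = Y1p s ω)
    (hpos : 0 < μ {ω | D ω = 1})
    (hU : ∀ s, s = 1 ∨ s = 2 ∨ s = t →
      ∫ ω, U s ω ∂μ[|{ω | D ω = 1}] = 0)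
    (hintY : ∀ s, s = 1 ∨ s = 2 ∨ s = t →
      Integrable (Y s) (μ[|{ω | D ω = 1}]))
    (hintY0 : Integrable (Y0 t) (μ[|{ω | D ω = 1}]))
    (hintY1p : Integrable (Y1p t) (μ[|{ω | D ω = 1}]))
    (hintU : ∀ s, s = 1 ∨ s = 2 ∨ s = t →
      Integrable (U s) (μ[|{ω | D ω = 1}]))
    (hintX : ∀ s, s = 1 ∨ s = 2 ∨ s = t → ∀ i,
      Integrable (fun ω => X s ω i) (μ[|{ω | D ω = 1}]))
    (hintξ : Integrable ξ (μ[|{ω | D ω = 1}]))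
    (hintlam : Integrable lam (μ[|{ω | D ω = 1}])) :
    ∫ ω, (Y1p t ω - Y0 t ω) ∂μ[|{ω | D ω = 1}]
      = ∫ ω, Y t ω ∂μ[|{ω | D ω = 1}]
        - (θ t + ∫ ω, Y 1 ω ∂μ[|{ω | D ω = 1}]
          + (∑ i, (∫ ω, (X t ω i - X 1 ω i) ∂μ[|{ω | D ω = 1}]) * β i)
          + F t * ∫ ω, (Y 2 ω - Y 1 ω) ∂μ[|{ω | D ω = 1}]
          - F t * (∑ i, (∫ ω, (X 2 ω i - X 1 ω i) ∂μ[|{ω | D ω = 1}]) * β i)) := by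
  have := cond_isProbabilityMeasure (s := {ω | D ω = 1}) hpos.ne'
  have mem1 : 1 = 1 ∨ 1 = 2 ∨ 1 = t := .inl rfl
  have mem2 : 2 = 1 ∨ 2 = 2 ∨ 2 = t := .inr (.inl rfl)
  have memt : t = 1 ∨ t = 2 ∨ t = t := .inr (.inr rfl)
  have hmean : ∀ s, (s = 1 ∨ s = 2 ∨ s = t) → 1 ≤ s → s ≤ T →
      ∫ ω, Y0 s ω ∂μ[|{ω | D ω = 1}]
        = θ s + ∫ ω, ξ ω ∂μ[|{ω | D ω = 1}] + (∫ ω, lam ω ∂μ[|{ω | D ω = 1}]) * F s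
          + ∑ i, (∫ ω, X s ω i ∂μ[|{ω | D ω = 1}]) * β i := by
    intro s hs hs1 hsT
    rw [funext (hmodel s hs1 hsT), integral_factor_model _ _ _ hintξ hintlam (hintX s hs)
      (hintU s hs), hU s hs, add_zero]
  have hY1mean := hmean 1 mem1 le_rfl (by omega)
  have hY2mean := hmean 2 mem2 (by omega) (by omega)
  rw [← funext hY1] at hY1mean
  rw [← funext hY2] at hY2mean
  have hYtmean : ∫ ω, Y t ω ∂μ[|{ω | D ω = 1}] = ∫ ω, Y1p t ω ∂μ[|{ω | D ω = 1}] :=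
    integral_cond_congr (hintY t memt).1 hintY1p.1 (hYt t ht htT)
  rw [integral_sub hintY1p hintY0, integral_sub (hintY 2 mem2) (hintY 1 mem1),
    sum_integral_sub_mul (hintX t memt) (hintX 1 mem1), sum_integral_sub_mul (hintX 2 mem2)
    (hintX 1 mem1), hmean t memt (by omega) htT, hY1mean, hY2mean, hYtmean, hθ1, hθ2, hF1, hF2]
  ring

/-- Theorem 4: identification of the ATT with time-varying
covariates under strict exogeneity. Under the model
`Y_t(0) = θ_t + ξ + λ·F_t + X_t'β + U_t` with time-invariant coefficient `β`
and normalizations `θ_1 = θ_2 = 0`, `F_1 = 0`, `F_2 = 1`, with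
`Y_1 = Y_1(0)`, `Y_2 = Y_2(0)` pointwise, `Y_t = Y_t(1)` on `{D=1}` for
`t ≥ 3`, `P(D=1) > 0`, and `E[U_s|D=1] = 0` for `s ∈ {1,2,t}`, the ATT in
period `t ≥ 3` equals
`E[Y_t|D=1] − (θ_t + E[Y_1|D=1] + E[X_t − X_1|D=1]·β + F_t·E[Y_2 − Y_1|D=1]
  − F_t·E[X_2 − X_1|D=1]·β)`. -/
theorem statement18
    {Ω : Type*} [MeasurableSpace Ω] (μ : Measure Ω) [IsProbabilityMeasure μ]
    (T KX t : ℕ) (hT : 3 ≤ T) (ht : 3 ≤ t) (htT : t ≤ T)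
    (Y0 Y1p Y U : ℕ → Ω → ℝ) (ξ lam : Ω → ℝ)
    (X : ℕ → Ω → Fin KX → ℝ) (D : Ω → ℝ)
    (θ F : ℕ → ℝ) (β : Fin KX → ℝ)
    (hD : ∀ ω, D ω = 0 ∨ D ω = 1)
    (hmodel : ∀ s, 1 ≤ s → s ≤ T → ∀ ω,
      Y0 s ω = θ s + ξ ω + lam ω * F s + (∑ i, X s ω i * β i) + U s ω)
    (hθ1 : θ 1 = 0) (hθ2 : θ 2 = 0) (hF1 : F 1 = 0) (hF2 : F 2 = 1)
    (hY1 : ∀ ω, Y 1 ω = Y0 1 ω) (hY2 : ∀ ω, Y 2 ω = Y0 2 ω)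
    (hYt : ∀ s, 3 ≤ s → s ≤ T → ∀ ω, D ω = 1 → Y s ω = Y1p s ω)
    (hpos : 0 < μ {ω | D ω = 1})
    (hU : ∀ s, s = 1 ∨ s = 2 ∨ s = t →
      ∫ ω, U s ω ∂μ[|{ω | D ω = 1}] = 0)
    (hintY : ∀ s, s = 1 ∨ s = 2 ∨ s = t →
      Integrable (Y s) (μ[|{ω | D ω = 1}]))
    (hintY0 : Integrable (Y0 t) (μ[|{ω | D ω = 1}]))
    (hintY1p : Integrable (Y1p t) (μ[|{ω | D ω = 1}]))
    (hintU : ∀ s, s = 1 ∨ s = 2 ∨ s = t →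
      Integrable (U s) (μ[|{ω | D ω = 1}]))
    (hintX : ∀ s, s = 1 ∨ s = 2 ∨ s = t → ∀ i,
      Integrable (fun ω => X s ω i) (μ[|{ω | D ω = 1}]))
    (hintξ : Integrable ξ (μ[|{ω | D ω = 1}]))
    (hintlam : Integrable lam (μ[|{ω | D ω = 1}])) :
    ∫ ω, (Y1p t ω - Y0 t ω) ∂μ[|{ω | D ω = 1}]
      = ∫ ω, Y t ω ∂μ[|{ω | D ω = 1}]
        - (θ t + ∫ ω, Y 1 ω ∂μ[|{ω | D ω = 1}]
          + (∑ i, (∫ ω, (X t ω i - X 1 ω i) ∂μ[|{ω | D ω = 1}]) * β i)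
          + F t * ∫ ω, (Y 2 ω - Y 1 ω) ∂μ[|{ω | D ω = 1}]
          - F t * (∑ i, (∫ ω, (X 2 ω i - X 1 ω i) ∂μ[|{ω | D ω = 1}]) * β i)) :=
  statement18_general μ T KX t ht htT Y0 Y1p Y U ξ lam X D θ F β hmodel hθ1 hθ2 hF1 hF2 hY1 hY2 hYt
    hpos hU hintY hintY0 hintY1p hintU hintX hintξ hintlam
end
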